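/- Let ω ∈ W₀ with associated weight matrix {W^(ℓ) : ℓ > 0}. Consider the assertions: (i) ω satisfies (ω₆); (ii) there exist ℓ₁, ℓ, a > 0 and C ≥ 1 such that ω_{W^(ℓ)}(t) ≤ a·(ω_{W^(ℓ₁)}(Ct) − ω_{W^(ℓ₁)}(t)) + C for all t ≥ 0; (iii) for every ℓ₁ > 0 there exist ℓ, a > 0 and C ≥ 1 such that ω_{W^(ℓ)}(t) ≤ a·(ω_{W^(ℓ₁)}(Ct) − ω_{W^(ℓ₁)}(t)) + C for all t ≥ 0; (iv) for every ℓ > 0 there exist ℓ₁, a > 0 and C ≥ 1 such that ω_{W^(ℓ)}(t) ≤ a·(ω_{W^(ℓ₁)}(Ct) − ω_{W^(ℓ₁)}(t)) + C for all t ≥ 0. Then (i) implies each of (ii), (iii), (iv); each of (iii), (iv) implies (ii); and if (ii) holds with parameters satisfying ℓ₁ > ℓ·a, then (i) holds. -/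

import Mathlib

open Real Filter Set

noncomputable section

/-- The class `LC` of normalized log-convex sequences with `(M_p)^{1/p} → ∞`. -/
def IsLC (M : ℕ → ℝ) : Prop :=
  (∀ p, 0 < M p) ∧ M 0 = 1 ∧ 1 ≤ M 1 ∧
  (∀ p : ℕ, 1 ≤ p → (M p) ^ 2 ≤ M (p - 1) * M (p + 1)) ∧
  Filter.Tendsto (fun p : ℕ => (M p) ^ ((p : ℝ)⁻¹)) Filter.atTop Filter.atTop

/-- The sequence of quotients `μ_0 = 1`, `μ_p = M_p / M_{p-1}`. -/
def seqQuot (M : ℕ → ℝ) (p : ℕ) : ℝ :=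
  if p = 0 then 1 else M p / M (p - 1)

/-- The associated weight function `ω_M(t) = sup_p log(t^p / M_p)`. -/
def omegaM (M : ℕ → ℝ) (t : ℝ) : ℝ :=
  ⨆ p : ℕ, Real.log (t ^ p / M p)

/-- The auxiliary sequence `M̃^a_p = (M_{ap})^{1/a}`. -/
def tildeSeq (M : ℕ → ℝ) (a : ℕ) (p : ℕ) : ℝ :=
  (M (a * p)) ^ ((a : ℝ)⁻¹)

/-- Condition (genmg) for the parameter `d`. -/
def genMG (M : ℕ → ℝ) (d : ℕ) : Prop :=
  ∃ A : ℝ, 1 ≤ A ∧ ∀ p : ℕ, 1 ≤ p →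
    seqQuot M p ≤ A * (M (d * p)) ^ (((d : ℝ) * (p : ℝ))⁻¹)

/-- The moderate growth index `g(M) ∈ ℕ ∪ {+∞}`. -/
def gIndex (M : ℕ → ℝ) : ℕ∞ :=
  sInf {e : ℕ∞ | ∃ n : ℕ, 0 < n ∧ genMG M n ∧ e = (n : ℕ∞)}

/-- The relation `M ≼ N`, i.e. `sup_{p ≥ 1} (M_p/N_p)^{1/p} < ∞`. -/
def Preceq (M N : ℕ → ℝ) : Prop :=
  ∃ C : ℝ, ∀ p : ℕ, 1 ≤ p → (M p / N p) ^ ((p : ℝ)⁻¹) ≤ C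

/-- The class `W₀` of normalized weight functions. -/
def IsW0 (ω : ℝ → ℝ) : Prop :=
  ContinuousOn ω (Set.Ici 0) ∧
  MonotoneOn ω (Set.Ici 0) ∧
  (∀ t ∈ Set.Icc (0 : ℝ) 1, ω t = 0) ∧
  Filter.Tendsto ω Filter.atTop Filter.atTop ∧
  (fun t => Real.log t) =o[Filter.atTop] ω ∧
  ConvexOn ℝ Set.univ (fun t => ω (Real.exp t))

/-- The Legendre–Fenchel–Young conjugate `φ*_ω(x) = sup{xy − ω(e^y) : y ≥ 0}`. -/
def phiStar (ω : ℝ → ℝ) (x : ℝ) : ℝ :=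
  sSup {z : ℝ | ∃ y : ℝ, 0 ≤ y ∧ z = x * y - ω (Real.exp y)}

/-- The associated weight matrix `W^(ℓ)_p = exp(φ*_ω(ℓp)/ℓ)`. -/
def Wmat (ω : ℝ → ℝ) (l : ℝ) (p : ℕ) : ℝ :=
  Real.exp (phiStar ω (l * p) / l)

/-- Condition `(ω₆)`. -/
def Omega6 (ω : ℝ → ℝ) : Prop :=
  ∃ H : ℝ, 1 ≤ H ∧ ∀ t : ℝ, 0 ≤ t → 2 * ω t ≤ ω (H * t) + H

/-- The counting function `Σ_M(t) = #{p ≥ 1 : μ_p ≤ t}`. -/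
def SigmaM (M : ℕ → ℝ) (t : ℝ) : ℕ :=
  Set.ncard {p : ℕ | 1 ≤ p ∧ seqQuot M p ≤ t}

end

/-- The mixed condition of Lemma `technlemma2cor1` for the parameters `ℓ₁, ℓ, a`. -/
def S7 (ω : ℝ → ℝ) (l1 l a : ℝ) : Prop :=
  ∃ C : ℝ, 1 ≤ C ∧ ∀ t : ℝ, 0 ≤ t →
    omegaM (Wmat ω l) t ≤ a * (omegaM (Wmat ω l1) (C * t) - omegaM (Wmat ω l1) t) + C

section AuxLemmas

variable {ω : ℝ → ℝ}

lemma w0_nonneg (hω : IsW0 ω) {t : ℝ} (ht : 0 ≤ t) : 0 ≤ ω t := by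
  have h0 : ω 0 = 0 := hω.2.2.1 0 ⟨le_refl _, zero_le_one⟩
  have := hω.2.1 (Set.mem_Ici.mpr (le_refl (0:ℝ))) (Set.mem_Ici.mpr ht) ht
  linarith

lemma phi_nonneg (hω : IsW0 ω) (y : ℝ) : 0 ≤ ω (Real.exp y) :=
  w0_nonneg hω (Real.exp_pos y).le

lemma phi_mono (hω : IsW0 ω) {y z : ℝ} (h : y ≤ z) : ω (Real.exp y) ≤ ω (Real.exp z) :=
  hω.2.1 (Set.mem_Ici.mpr (Real.exp_pos y).le) (Set.mem_Ici.mpr (Real.exp_pos z).le)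
    (Real.exp_le_exp.mpr h)

lemma phiStar_nonempty (ω : ℝ → ℝ) (x : ℝ) :
    ({z : ℝ | ∃ y : ℝ, 0 ≤ y ∧ z = x * y - ω (Real.exp y)}).Nonempty :=
  ⟨x * 0 - ω (Real.exp 0), 0, le_refl _, rfl⟩

lemma phiStar_bddAbove (hω : IsW0 ω) {x : ℝ} (hx : 0 ≤ x) :
    BddAbove {z : ℝ | ∃ y : ℝ, 0 ≤ y ∧ z = x * y - ω (Real.exp y)} := by
  obtain ⟨T₀, hT₀⟩ := Filter.eventually_atTop.mp
    (hω.2.2.2.2.1.def (show (0:ℝ) < 1/(x+1) by positivity))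
  set Y₀ := max T₀ 0 with hY₀
  have hY₀0 : 0 ≤ Y₀ := le_max_right _ _
  refine ⟨x * Y₀, ?_⟩
  rintro z ⟨y, hy, rfl⟩
  rcases le_or_gt y Y₀ with hcase | hcase
  · have h1 : x * y ≤ x * Y₀ := mul_le_mul_of_nonneg_left hcase hx
    have := phi_nonneg hω y
    linarith
  · have hey : T₀ ≤ Real.exp y := by
      have h1 : y + 1 ≤ Real.exp y := Real.add_one_le_exp y
      have h2 : T₀ ≤ Y₀ := le_max_left _ _
      linarith
    have h1 := hT₀ (Real.exp y) hey
    rw [Real.log_exp, Real.norm_eq_abs, Real.norm_eq_abs,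
      abs_of_nonneg hy, abs_of_nonneg (phi_nonneg hω y)] at h1
    -- y ≤ 1/(x+1) * ω (exp y)
    have h2 : (x + 1) * y ≤ ω (Real.exp y) := by
      have h3 := mul_le_mul_of_nonneg_left h1 (show (0:ℝ) ≤ x + 1 by linarith)
      have h4 : (x+1) * (1/(x+1) * ω (Real.exp y)) = ω (Real.exp y) := by
        field_simp
      linarith
    have h5 : 0 ≤ x * Y₀ := mul_nonneg hx hY₀0
    nlinarith

lemma phiStar_ge (hω : IsW0 ω) {x y : ℝ} (hx : 0 ≤ x) (hy : 0 ≤ y) :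
    x * y - ω (Real.exp y) ≤ phiStar ω x :=
  le_csSup (phiStar_bddAbove hω hx) ⟨y, hy, rfl⟩

lemma phiStar_nonneg (hω : IsW0 ω) {x : ℝ} (hx : 0 ≤ x) : 0 ≤ phiStar ω x := by
  have h := phiStar_ge hω hx (le_refl (0:ℝ))
  have h1 : ω (Real.exp 0) = 0 := by
    rw [Real.exp_zero]; exact hω.2.2.1 1 ⟨zero_le_one, le_refl _⟩
  rw [h1] at h; linarith

lemma phiStar_zero (hω : IsW0 ω) : phiStar ω 0 = 0 := by
  refine le_antisymm ?_ (phiStar_nonneg hω (le_refl _))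
  refine csSup_le (phiStar_nonempty ω 0) ?_
  rintro z ⟨y, hy, rfl⟩
  have := phi_nonneg hω y
  linarith

lemma Wmat_pos (ω : ℝ → ℝ) (l : ℝ) (p : ℕ) : 0 < Wmat ω l p := Real.exp_pos _

lemma Wmat_zero (hω : IsW0 ω) (l : ℝ) : Wmat ω l 0 = 1 := by
  unfold Wmat
  rw [Nat.cast_zero, mul_zero, phiStar_zero hω, zero_div, Real.exp_zero]

lemma term_eq (ω : ℝ → ℝ) {l t : ℝ} (ht : 0 < t) (p : ℕ) :
    Real.log (t ^ p / Wmat ω l p) = (p : ℝ) * Real.log t - phiStar ω (l * p) / l := by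
  rw [Real.log_div (by positivity) (ne_of_gt (Wmat_pos ω l p)), Real.log_pow]
  unfold Wmat
  rw [Real.log_exp]

lemma term_le (hω : IsW0 ω) {l t : ℝ} (hl : 0 < l) (ht : 0 ≤ t) (p : ℕ) :
    Real.log (t ^ p / Wmat ω l p) ≤ ω t / l := by
  rcases eq_or_lt_of_le ht with h0 | htpos
  · have hω0 : ω 0 = 0 := hω.2.2.1 0 ⟨le_refl _, zero_le_one⟩
    rw [← h0, hω0, zero_div]
    cases p with
    | zero => rw [pow_zero, Wmat_zero hω, div_one, Real.log_one]
    | succ n =>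
        rw [zero_pow (Nat.succ_ne_zero n), zero_div, Real.log_zero]
  · rw [term_eq ω htpos p]
    rcases le_or_gt 1 t with h1 | h1
    · have hy : 0 ≤ Real.log t := Real.log_nonneg h1
      have hst := phiStar_ge hω (x := l * p) (y := Real.log t) (by positivity) hy
      rw [Real.exp_log htpos] at hst
      have h2 : (p : ℝ) * Real.log t = (l * p * Real.log t) / l := by
        field_simp
      rw [h2, div_sub_div_same, div_le_div_iff_of_pos_right hl]
      linarith
    · have h2 : Real.log t ≤ 0 := Real.log_nonpos htpos.le h1.le
      have h3 : 0 ≤ phiStar ω (l * p) := phiStar_nonneg hω (by positivity)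
      have h4 : ω t = 0 := hω.2.2.1 t ⟨htpos.le, h1.le⟩
      rw [h4, zero_div]
      have h5 : (p : ℝ) * Real.log t ≤ 0 :=
        mul_nonpos_of_nonneg_of_nonpos (Nat.cast_nonneg p) h2
      have h6 : 0 ≤ phiStar ω (l * p) / l := div_nonneg h3 hl.le
      linarith

lemma bddAbove_term (hω : IsW0 ω) {l t : ℝ} (hl : 0 < l) (ht : 0 ≤ t) :
    BddAbove (Set.range fun p : ℕ => Real.log (t ^ p / Wmat ω l p)) := by
  refine ⟨ω t / l, ?_⟩
  rintro z ⟨p, rfl⟩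
  exact term_le hω hl ht p

lemma omegaM_le (hω : IsW0 ω) {l t : ℝ} (hl : 0 < l) (ht : 0 ≤ t) :
    omegaM (Wmat ω l) t ≤ ω t / l :=
  ciSup_le (term_le hω hl ht)

lemma omegaM_nonneg (hω : IsW0 ω) {l t : ℝ} (hl : 0 < l) (ht : 0 ≤ t) :
    0 ≤ omegaM (Wmat ω l) t := by
  have h0 : Real.log (t ^ (0:ℕ) / Wmat ω l 0) = 0 := by
    rw [pow_zero, Wmat_zero hω, div_one, Real.log_one]
  have := le_ciSup (bddAbove_term hω hl ht) 0
  rw [h0] at this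
  exact this

lemma omegaM_mono (hω : IsW0 ω) {l t t' : ℝ} (hl : 0 < l) (ht : 0 ≤ t) (h : t ≤ t') :
    omegaM (Wmat ω l) t ≤ omegaM (Wmat ω l) t' := by
  rcases eq_or_lt_of_le ht with h0 | htpos
  · have hz : ∀ p : ℕ, Real.log ((0:ℝ) ^ p / Wmat ω l p) = 0 := by
      intro p
      cases p with
      | zero => rw [pow_zero, Wmat_zero hω, div_one, Real.log_one]
      | succ n => rw [zero_pow (Nat.succ_ne_zero n), zero_div, Real.log_zero]
    have h1 : omegaM (Wmat ω l) 0 = 0 := by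
      unfold omegaM
      rw [iSup_congr hz, ciSup_const]
    rw [← h0, h1]
    exact omegaM_nonneg hω hl (h0 ▸ (ht.trans h))
  · refine ciSup_mono (bddAbove_term hω hl (ht.trans h)) (fun p => ?_)
    have ht' : 0 < t' := lt_of_lt_of_le htpos h
    have hle : t ^ p / Wmat ω l p ≤ t' ^ p / Wmat ω l p :=
      (div_le_div_iff_of_pos_right (Wmat_pos ω l p)).mpr (pow_le_pow_left₀ ht h p)
    exact Real.log_le_log (div_pos (pow_pos htpos p) (Wmat_pos ω l p)) hle

lemma littleo_bound (hω : IsW0 ω) {c : ℝ} (hc : 0 < c) :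
    ∃ T : ℝ, 1 ≤ T ∧ ∀ t : ℝ, T ≤ t → Real.log t ≤ c * ω t := by
  obtain ⟨T₀, hT₀⟩ := Filter.eventually_atTop.mp (hω.2.2.2.2.1.def hc)
  refine ⟨max T₀ 1, le_max_right _ _, fun t ht => ?_⟩
  have h1 := hT₀ t (le_trans (le_max_left _ _) ht)
  have ht1 : (1:ℝ) ≤ t := le_trans (le_max_right _ _) ht
  rw [Real.norm_eq_abs, Real.norm_eq_abs, abs_of_nonneg (w0_nonneg hω (by linarith))] at h1
  exact le_trans (le_abs_self _) h1

lemma omegaM_lower (hω : IsW0 ω) {l t : ℝ} (hl : 0 < l) (ht : 1 ≤ t) :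
    ω t ≤ l * omegaM (Wmat ω l) t + l * Real.log t := by
  have htpos : 0 < t := lt_of_lt_of_le one_pos ht
  set y := Real.log t with hy
  have hy0 : 0 ≤ y := Real.log_nonneg ht
  have hyt : Real.exp y = t := Real.exp_log htpos
  refine le_of_forall_pos_le_add (fun ε hε => ?_)
  -- continuity of φ = ω ∘ exp at y
  have hcω : ContinuousAt ω (Real.exp y) :=
    hω.1.continuousAt (Ici_mem_nhds (Real.exp_pos y))
  have hcontAt : ContinuousAt (fun z => ω (Real.exp z)) y :=
    hcω.comp Real.continuous_exp.continuousAt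
  obtain ⟨δ0, hδ0, hδ⟩ := Metric.continuousAt_iff.mp hcontAt ε hε
  set δ := δ0 / 2 with hδdef
  have hδpos : 0 < δ := by positivity
  set s := (ω (Real.exp y) - ω (Real.exp (y - δ))) / δ with hs
  have hsδ : s * δ = ω (Real.exp y) - ω (Real.exp (y - δ)) :=
    div_mul_cancel₀ _ (ne_of_gt hδpos)
  have hs0 : 0 ≤ s :=
    div_nonneg (sub_nonneg.mpr (phi_mono hω (by linarith))) hδpos.le
  have hεδ : ω (Real.exp y) - ω (Real.exp (y - δ)) < ε := by
    have hdist : dist (y - δ) y < δ0 := by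
      rw [Real.dist_eq]
      have : |y - δ - y| = δ := by
        rw [show y - δ - y = -δ by ring, abs_neg, abs_of_pos hδpos]
      rw [this]; linarith
    have h2 := hδ hdist
    rw [Real.dist_eq] at h2
    have h3 := abs_lt.mp h2
    linarith [h3.1]
  set p := ⌊s / l⌋₊ with hp
  have hp1 : l * p ≤ s := by
    have h1 := Nat.floor_le (show (0:ℝ) ≤ s / l by positivity)
    have h2 := mul_le_mul_of_nonneg_left h1 hl.le
    rwa [mul_div_cancel₀ _ (ne_of_gt hl)] at h2
  have hp2 : s < l * (p + 1) := by
    have h1 := Nat.lt_floor_add_one (s / l)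
    have h2 := mul_lt_mul_of_pos_left h1 hl
    rwa [mul_div_cancel₀ _ (ne_of_gt hl)] at h2
  -- key bound
  have hkey : ∀ z : ℝ, 0 ≤ z →
      (l * p) * z - ω (Real.exp z) ≤ s * y - ω (Real.exp y) + ε := by
    intro z hz
    rcases lt_or_ge z (y - δ) with hc1 | hc1
    · have hsl := hω.2.2.2.2.2.slope_mono_adjacent (Set.mem_univ z) (Set.mem_univ y)
        hc1 (show y - δ < y by linarith)
      rw [show y - (y - δ) = δ by ring] at hsl
      have h3 : ω (Real.exp (y - δ)) - ω (Real.exp z) ≤ s * ((y - δ) - z) := by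
        have h2 : 0 < (y - δ) - z := by linarith
        have := (div_le_iff₀ h2).mp hsl
        rw [← hs] at this
        linarith
      have h4 : (l * p) * z ≤ s * z := mul_le_mul_of_nonneg_right hp1 hz
      nlinarith [hsδ, hε.le]
    · rcases le_or_gt z y with hc2 | hc2
      · have h3 : ω (Real.exp (y - δ)) ≤ ω (Real.exp z) := phi_mono hω hc1
        have h4 : (l * p) * z ≤ (l * p) * y :=
          mul_le_mul_of_nonneg_left hc2 (by positivity)
        have h5 : (l * p) * y ≤ s * y := mul_le_mul_of_nonneg_right hp1 hy0
        linarith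
      · have hsl := hω.2.2.2.2.2.slope_mono_adjacent (Set.mem_univ (y - δ))
          (Set.mem_univ z) (show y - δ < y by linarith) hc2
        rw [show y - (y - δ) = δ by ring] at hsl
        have h2 : 0 < z - y := by linarith
        rw [← hs] at hsl
        have h3 : s * (z - y) ≤ ω (Real.exp z) - ω (Real.exp y) :=
          (le_div_iff₀ h2).mp hsl
        have h4 : (l * p) * z ≤ s * z := mul_le_mul_of_nonneg_right hp1 hz
        nlinarith
  have hps : phiStar ω (l * p) ≤ s * y - ω (Real.exp y) + ε := by
    refine csSup_le (phiStar_nonempty ω (l * p)) ?_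
    rintro z ⟨y', hy', rfl⟩
    exact hkey y' hy'
  have hterm : (p : ℝ) * y - phiStar ω (l * p) / l ≤ omegaM (Wmat ω l) t := by
    have h1 := le_ciSup (bddAbove_term hω hl htpos.le) p
    rw [term_eq ω htpos p] at h1
    exact h1
  have hid : l * ((p : ℝ) * y - phiStar ω (l * p) / l)
      = l * p * y - phiStar ω (l * p) := by
    field_simp
  have hterm2 := mul_le_mul_of_nonneg_left hterm hl.le
  rw [hid] at hterm2
  have hfin : (s - l * p) * y ≤ l * y :=
    mul_le_mul_of_nonneg_right (by linarith) hy0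
  have hωt : ω (Real.exp y) = ω t := by rw [hyt]
  linarith [hterm2, hps, hfin, hωt]

end AuxLemmas

lemma forwardS7 {ω : ℝ → ℝ} (hω : IsW0 ω) (h6 : Omega6 ω) {l : ℝ} (hl : 0 < l) :
    S7 ω l l 2 := by
  obtain ⟨H, hH1, h2ω⟩ := h6
  obtain ⟨T, hT1, hT⟩ := littleo_bound hω (show (0:ℝ) < 5 / (2 * l) by positivity)
  set σ := omegaM (Wmat ω l) with hσ
  set K := (6 * H + 4 * l * Real.log H) / l with hK
  have hlogH : 0 ≤ Real.log H := Real.log_nonneg hH1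
  have hK0 : 0 ≤ K := by positivity
  have hH0 : 0 < H := by linarith
  have hkey : ∀ t : ℝ, T ≤ t → 3 * σ t ≤ 2 * σ (H ^ 2 * t) + K := by
    intro t ht
    have ht1 : 1 ≤ t := le_trans hT1 ht
    have ht0 : 0 < t := by linarith
    have e1 : l * σ t ≤ ω t := by
      have h := omegaM_le hω hl ht0.le
      rw [le_div_iff₀ hl] at h
      rw [hσ]; linarith
    have e2 : 2 * ω t ≤ ω (H * t) + H := h2ω t ht0.le
    have e3 : 2 * ω (H * t) ≤ ω (H * (H * t)) + H := h2ω (H * t) (by positivity)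
    rw [show H * (H * t) = H ^ 2 * t by ring] at e3
    have hH2t : 1 ≤ H ^ 2 * t := by nlinarith
    have e4 : ω (H ^ 2 * t) ≤ l * σ (H ^ 2 * t) + l * Real.log (H ^ 2 * t) :=
      omegaM_lower hω hl hH2t
    have e5 : Real.log (H ^ 2 * t) = 2 * Real.log H + Real.log t := by
      rw [Real.log_mul (by positivity) (ne_of_gt ht0), Real.log_pow]
      push_cast; ring
    have e6 : Real.log t ≤ 5 / (2 * l) * ω t := hT t ht
    have e6' : 2 * l * Real.log t ≤ 5 * ω t := by
      have h1 := mul_le_mul_of_nonneg_left e6 (show (0:ℝ) ≤ 2 * l by positivity)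
      have h2 : 2 * l * (5 / (2 * l) * ω t) = 5 * ω t := by field_simp
      linarith
    rw [e5] at e4
    rw [hK, ← sub_le_iff_le_add', le_div_iff₀ hl]
    have e1' : l * σ (H ^ 2 * t) ≥ ω (H ^ 2 * t) - l * (2 * Real.log H + Real.log t) := by
      linarith
    nlinarith [e1, e2, e3, e1', e6']
  set C := max (max (H ^ 2) (K + 3 * σ T)) 1 with hC
  have hC1 : (1:ℝ) ≤ C := le_max_right _ _
  have hC0 : (0:ℝ) < C := lt_of_lt_of_le one_pos hC1
  have hCH : H ^ 2 ≤ C := le_trans (le_max_left _ _) (le_max_left _ _)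
  have hCK : K + 3 * σ T ≤ C := le_trans (le_max_right _ _) (le_max_left _ _)
  have hσT0 : 0 ≤ σ T := omegaM_nonneg hω hl (by linarith)
  refine ⟨C, hC1, fun t ht0 => ?_⟩
  have hσCt0 : 0 ≤ σ (C * t) := omegaM_nonneg hω hl (by positivity)
  rcases le_or_gt T t with hTt | hTt
  · have h1 := hkey t hTt
    have h2 : σ (H ^ 2 * t) ≤ σ (C * t) :=
      omegaM_mono hω hl (by positivity) (by nlinarith)
    show σ t ≤ 2 * (σ (C * t) - σ t) + C
    have hσt0 : 0 ≤ σ t := omegaM_nonneg hω hl ht0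
    linarith
  · have h1 : σ t ≤ σ T := omegaM_mono hω hl ht0 hTt.le
    have hσt0 : 0 ≤ σ t := omegaM_nonneg hω hl ht0
    show σ t ≤ 2 * (σ (C * t) - σ t) + C
    linarith

theorem stmt7 (ω : ℝ → ℝ) (hω : IsW0 ω) :
    (Omega6 ω → ∃ l1 l a : ℝ, 0 < l1 ∧ 0 < l ∧ 0 < a ∧ S7 ω l1 l a) ∧
    (Omega6 ω → ∀ l1 : ℝ, 0 < l1 → ∃ l a : ℝ, 0 < l ∧ 0 < a ∧ S7 ω l1 l a) ∧
    (Omega6 ω → ∀ l : ℝ, 0 < l → ∃ l1 a : ℝ, 0 < l1 ∧ 0 < a ∧ S7 ω l1 l a) ∧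
    ((∀ l1 : ℝ, 0 < l1 → ∃ l a : ℝ, 0 < l ∧ 0 < a ∧ S7 ω l1 l a) →
      ∃ l1 l a : ℝ, 0 < l1 ∧ 0 < l ∧ 0 < a ∧ S7 ω l1 l a) ∧
    ((∀ l : ℝ, 0 < l → ∃ l1 a : ℝ, 0 < l1 ∧ 0 < a ∧ S7 ω l1 l a) →
      ∃ l1 l a : ℝ, 0 < l1 ∧ 0 < l ∧ 0 < a ∧ S7 ω l1 l a) ∧
    (∀ l1 l a : ℝ, 0 < l → 0 < a → l * a < l1 → S7 ω l1 l a → Omega6 ω) := by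
  refine ⟨fun h6 => ⟨1, 1, 2, one_pos, one_pos, two_pos, forwardS7 hω h6 one_pos⟩,
    fun h6 l1 hl1 => ⟨l1, 2, hl1, two_pos, forwardS7 hω h6 hl1⟩,
    fun h6 l hl => ⟨l, 2, hl, two_pos, forwardS7 hω h6 hl⟩,
    fun h => ?_, fun h => ?_, ?_⟩
  · obtain ⟨l, a, hl, ha, hS⟩ := h 1 one_pos
    exact ⟨1, l, a, one_pos, hl, ha, hS⟩
  · obtain ⟨l1, a, hl1, ha, hS⟩ := h 1 one_pos
    exact ⟨l1, 1, a, hl1, one_pos, ha, hS⟩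
  · intro l1 l a hl ha hla hS7
    obtain ⟨C, hC1, hS⟩ := hS7
    have hl1 : 0 < l1 := lt_trans (by positivity) hla
    set ε := (l1 - a * l) / (2 * (1 + a) * l * l1) with hε
    have hεpos : 0 < ε := div_pos (by nlinarith) (by positivity)
    obtain ⟨T, hT1, hT⟩ := littleo_bound hω hεpos
    have hC0 : (0:ℝ) < C := lt_of_lt_of_le one_pos hC1
    have hmain : ∀ t : ℝ, T ≤ t → 2 * ω t ≤ ω (C * t) + C * l1 / a := by
      intro t ht
      have ht1 : (1:ℝ) ≤ t := le_trans hT1 ht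
      have ht0 : 0 < t := by linarith
      have h1 : ω t ≤ l * omegaM (Wmat ω l) t + l * Real.log t := omegaM_lower hω hl ht1
      have h2 : l1 * omegaM (Wmat ω l1) (C * t) ≤ ω (C * t) := by
        have h := omegaM_le hω hl1 (show (0:ℝ) ≤ C * t by positivity)
        rw [le_div_iff₀ hl1] at h
        linarith
      have h3 : ω t ≤ l1 * omegaM (Wmat ω l1) t + l1 * Real.log t := omegaM_lower hω hl1 ht1
      have h4 := hS t ht0.le
      have h5 : Real.log t ≤ ε * ω t := hT t ht
      have hX : 0 ≤ ω t := w0_nonneg hω ht0.le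
      have hh1 := mul_le_mul_of_nonneg_left h1 hl1.le
      have hh4 := mul_le_mul_of_nonneg_left h4 (show (0:ℝ) ≤ l * l1 by positivity)
      have hh2 := mul_le_mul_of_nonneg_left h2 (show (0:ℝ) ≤ a * l by positivity)
      have hh3 := mul_le_mul_of_nonneg_left h3 (show (0:ℝ) ≤ a * l by positivity)
      have hh5 := mul_le_mul_of_nonneg_left h5
        (show (0:ℝ) ≤ (1 + a) * l * l1 by positivity)
      have hid2 : (1 + a) * l * l1 * (ε * ω t) = ((l1 - a * l) / 2) * ω t := by
        rw [hε]; field_simp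
      rw [hid2] at hh5
      have hXX : 0 ≤ ((l1 - a * l) / 2) * ω t :=
        mul_nonneg (by nlinarith) hX
      have hstep : 2 * (a * l) * ω t ≤ (a * l) * ω (C * t) + C * l * l1 := by
        nlinarith [hh1, hh4, hh2, hh3, hh5, hXX]
      have hal : (0:ℝ) < a * l := by positivity
      refine le_of_mul_le_mul_left ?_ hal
      have hid3 : a * l * (ω (C * t) + C * l1 / a) = (a * l) * ω (C * t) + C * l * l1 := by
        field_simp
      rw [hid3]
      linarith
    refine ⟨max (max C (C * l1 / a)) (max 1 (2 * ω T)), ?_, fun t ht => ?_⟩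
    · exact le_trans (le_max_left 1 _) (le_max_right _ _)
    · set H := max (max C (C * l1 / a)) (max 1 (2 * ω T)) with hH
      have hHC : C ≤ H := le_trans (le_max_left _ _) (le_max_left _ _)
      have hHK : C * l1 / a ≤ H := le_trans (le_max_right _ _) (le_max_left _ _)
      have hHT : 2 * ω T ≤ H := le_trans (le_max_right _ _) (le_max_right _ _)
      have hH1 : (1:ℝ) ≤ H := le_trans (le_max_left 1 _) (le_max_right _ _)
      have hH0 : (0:ℝ) < H := lt_of_lt_of_le one_pos hH1
      rcases le_or_gt t T with hcase | hcase
      · have h1 : ω t ≤ ω T := hω.2.1 (Set.mem_Ici.mpr ht)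
          (Set.mem_Ici.mpr (by linarith)) hcase
        have h2 : 0 ≤ ω (H * t) := w0_nonneg hω (by positivity)
        linarith
      · have h1 := hmain t hcase.le
        have h2 : ω (C * t) ≤ ω (H * t) := hω.2.1
          (Set.mem_Ici.mpr (by positivity)) (Set.mem_Ici.mpr (by positivity))
          (mul_le_mul_of_nonneg_right hHC ht)
        linarith
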